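/- Bound for a in terms of A (Lemma 6.3(ii)): Let s > (d+1)/2. There is a constant C, depending on d, s and k, such that for every holomorphic R ∈ H^{s−1/2,1/2}(𝕋^d), the function a := i(P̄[conj(R)·∂_α R] − P[R·∂_α conj(R)]) satisfies ‖a‖_{H^{s−1/2}} ≤ C ‖R‖²_{H^{s−1/2,1/2}}. -/

import Mathlib

noncomputable section
open scoped BigOperators
open Filter

/-- The frequency lattice `ℤ^d` of the torus `𝕋^d`. -/
abbrev Freq (d : ℕ) := Fin d → ℤ

/-- A function on `𝕋^d`, represented by its sequence of Fourier coefficients. -/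
abbrev Coeffs (d : ℕ) := Freq d → ℂ

variable {d : ℕ}

/-- The pairing `⟨j, k⟩` between a lattice frequency and the frequency vector `k ∈ ℝ^d`. -/
def dotk (k : Fin d → ℝ) (j : Freq d) : ℝ := ∑ i, (j i : ℝ) * k i

/-- The Japanese bracket `⟨j⟩ = (1+|j|²)^{1/2}`. -/
def jb (j : Freq d) : ℝ := Real.sqrt (1 + ∑ i, ((j i : ℝ)) ^ 2)

/-- The entries of `k` are linearly independent over `ℚ` (equivalently, over `ℤ`). -/
def Indep (k : Fin d → ℝ) : Prop := ∀ j : Freq d, dotk k j = 0 → j = 0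

/-- The weight defining the anisotropic Sobolev norm `H^{s,θ}`. -/
def wt (k : Fin d → ℝ) (s θ : ℝ) (j : Freq d) : ℝ :=
  jb j ^ (2 * s) * (1 + (dotk k j) ^ 2) ^ θ

/-- Membership in the anisotropic Sobolev space `H^{s,θ}(𝕋^d)`. -/
def MemSob (k : Fin d → ℝ) (s θ : ℝ) (u : Coeffs d) : Prop :=
  Summable (fun j : Freq d => wt k s θ j * ‖u j‖ ^ 2)

/-- The `H^{s,θ}(𝕋^d)` norm. -/
def sobNorm (k : Fin d → ℝ) (s θ : ℝ) (u : Coeffs d) : ℝ :=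
  Real.sqrt (∑' j : Freq d, wt k s θ j * ‖u j‖ ^ 2)

/-- Membership in the Sobolev space `H^s(𝕋^d)`; `H^0 = L²`. -/
def MemHs (s : ℝ) (u : Coeffs d) : Prop :=
  Summable (fun j : Freq d => jb j ^ (2 * s) * ‖u j‖ ^ 2)

/-- The `H^s(𝕋^d)` norm; for `s = 0` this is the `L²(𝕋^d)` norm (spectrally normalized). -/
def HsNorm (s : ℝ) (u : Coeffs d) : ℝ :=
  Real.sqrt (∑' j : Freq d, jb j ^ (2 * s) * ‖u j‖ ^ 2)

/-- The value of the function with Fourier coefficients `u` at the point `α ∈ 𝕋^d = ℝ^d/(2πℤ)^d`,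
namely `Σ_j û_j e^{i⟨j,α⟩}`. -/
def value (u : Coeffs d) (α : Fin d → ℝ) : ℂ :=
  ∑' j : Freq d, u j * Complex.exp (Complex.I * ((∑ i, (j i : ℝ) * α i : ℝ) : ℂ))

/-- The squared norm of the space `ℋ^σ = H^σ × H^{σ,1/2}`. -/
def HHnormSq (k : Fin d → ℝ) (σ : ℝ) (W R : Coeffs d) : ℝ :=
  HsNorm σ W ^ 2 + sobNorm k σ (1/2) R ^ 2

/-- The norm of the space `ℋ^σ = H^σ × H^{σ,1/2}`. -/
def HHnorm (k : Fin d → ℝ) (σ : ℝ) (W R : Coeffs d) : ℝ :=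
  Real.sqrt (HHnormSq k σ W R)

/-- Membership in `ℋ^σ = H^σ × H^{σ,1/2}`. -/
def MemHH (k : Fin d → ℝ) (σ : ℝ) (W R : Coeffs d) : Prop :=
  MemHs σ W ∧ MemSob k σ (1/2) R

/-- The directional derivative `∂_α = k₁∂₁+⋯+k_d∂_d`, acting on Fourier coefficients
by multiplication by `i⟨j,k⟩`. -/
def dAl (k : Fin d → ℝ) (u : Coeffs d) : Coeffs d :=
  fun j => Complex.I * (dotk k j : ℝ) * u j

/-- The projection `P`: the Fourier multiplier which is `1` for `⟨j,k⟩ < 0`, `1/2`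
at the zero mode, `0` for `⟨j,k⟩ > 0`. -/
def Pp (k : Fin d → ℝ) (u : Coeffs d) : Coeffs d := fun j =>
  if dotk k j < 0 then u j else if dotk k j = 0 then u j / 2 else 0

/-- The complementary projection `P̄ = I - P`. -/
def Pb (k : Fin d → ℝ) (u : Coeffs d) : Coeffs d := u - Pp k u

/-- The Fourier coefficients of the complex conjugate function. -/
def conjC (u : Coeffs d) : Coeffs d := fun j => (starRingEnd ℂ) (u (-j))

/-- The Fourier coefficients of the product of two functions (convolution). -/
def cmul (u v : Coeffs d) : Coeffs d := fun j => ∑' m : Freq d, u m * v (j - m)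

/-- The Fourier coefficients of the constant function `1`. -/
def oneC : Coeffs d := fun j => if j = 0 then 1 else 0

/-- `u` is holomorphic: its Fourier coefficients vanish for `⟨j,k⟩ > 0`. -/
def Holo (k : Fin d → ℝ) (u : Coeffs d) : Prop := ∀ j : Freq d, 0 < dotk k j → u j = 0

/-- The coefficients of `2 Re u`. -/
def twoRe (u : Coeffs d) : Coeffs d := u + conjC u

/-- The coefficients of `2 Im u`. -/
def twoIm (u : Coeffs d) : Coeffs d := fun j => (u j - conjC u j) / Complex.I

/-- The coefficients of `u²`. -/
def csq (u : Coeffs d) : Coeffs d := cmul u u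

/-- The coefficients of `|u|² = u·conj(u)`. -/
def absSqC (u : Coeffs d) : Coeffs d := cmul u (conjC u)

/-- The advection velocity `b := 2 Re P[R(1-conj Y)]`. -/
def bC (k : Fin d → ℝ) (R Y : Coeffs d) : Coeffs d :=
  twoRe (Pp k (cmul R (oneC - conjC Y)))

/-- The frequency shift `a := i(P̄[conj(R)·R_α] - P[R·conj(R)_α])`. -/
def aCf (k : Fin d → ℝ) (R : Coeffs d) : Coeffs d := fun j =>
  Complex.I * ((Pb k (cmul (conjC R) (dAl k R)) - Pp k (cmul R (dAl k (conjC R)))) j)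

/-- The auxiliary function
`M := P̄[conj(R)·Y_α − R_α·conj(Y)] + P[R·conj(Y)_α − conj(R)_α·Y]`. -/
def MCf (k : Fin d → ℝ) (R Y : Coeffs d) : Coeffs d :=
  Pb k (cmul (conjC R) (dAl k Y) - cmul (dAl k R) (conjC Y))
    + Pp k (cmul R (dAl k (conjC Y)) - cmul (dAl k (conjC R)) Y)

/-- `(W,R,Y)` solves the differentiated gravity water wave system on the time interval `I`:
`𝐖_t + b·𝐖_α + (1+𝐖)(1−conj Y)·R_α = (1+𝐖)M` and `R_t + b·R_α = i(Y − a(1−Y))`,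
where `Y = 𝐖/(1+𝐖)` (equivalently `(1+𝐖)·Y = 𝐖`), so that
`(1+𝐖)/(1+conj 𝐖) = (1+𝐖)(1−conj Y)` and `i(𝐖−a)/(1+𝐖) = i(Y − a(1−Y))`. -/
structure IsWWSol (k : Fin d → ℝ) (I : Set ℝ) (W R Y : ℝ → Coeffs d) : Prop where
  holoW : ∀ t ∈ I, Holo k (W t)
  holoR : ∀ t ∈ I, Holo k (R t)
  Ymem : ∀ t ∈ I, MemHs 0 (Y t)
  Ydef : ∀ t ∈ I, cmul (oneC + W t) (Y t) = W t
  eqW : ∀ t ∈ I, ∀ j : Freq d,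
    HasDerivWithinAt (fun τ => W τ j)
      ((cmul (oneC + W t) (MCf k (R t) (Y t))
        - cmul (bC k (R t) (Y t)) (dAl k (W t))
        - cmul (cmul (oneC + W t) (oneC - conjC (Y t))) (dAl k (R t))) j) I t
  eqR : ∀ t ∈ I, ∀ j : Freq d,
    HasDerivWithinAt (fun τ => R τ j)
      ((Complex.I • (Y t - cmul (aCf k (R t)) (oneC - Y t))
        - cmul (bC k (R t) (Y t)) (dAl k (R t))) j) I t

/-
Because `R` is holomorphic, a nonzero term `conj R̂(-m) · i⟨j-m,k⟩ R̂(j-m)` of `conj(R)·∂_α R` at a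
frequency with `⟨j,k⟩ ≥ 0` (the only ones `P̄` keeps) has `⟨m,k⟩ ≥ 0 ≥ ⟨j-m,k⟩`, hence
`|⟨j-m,k⟩| ≤ |⟨m,k⟩|`, and the derivative can be split as a half derivative on each factor:
`|⟨j-m,k⟩| ≤ (1+⟨m,k⟩²)^{1/4} (1+⟨j-m,k⟩²)^{1/4}`. The same holds for `R·∂_α conj(R)` where `P`
acts. So `|â_j|` is bounded by the convolution of the moduli of the coefficients of `⟨∂_α⟩^{1/2} conj R`
and `⟨∂_α⟩^{1/2} R`, whose `H^{s-1/2}` norms are both `‖R‖_{H^{s-1/2,1/2}}`. It remains to use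
that `H^σ` is an algebra for `σ = s - 1/2 > d/2`: `⟨j⟩^σ ≤ 2^σ (⟨m⟩^σ + ⟨j-m⟩^σ)` puts the weight
on one factor, and Cauchy–Schwarz against `Σ_m ⟨m⟩^{-2σ} < ∞` bounds each piece.
-/

theorem summable_mul_and_tsum_mul_le_sqrt {ι : Type*} {f g : ι → ℝ} (hf0 : ∀ i, 0 ≤ f i)
    (hg0 : ∀ i, 0 ≤ g i) (hf : Summable fun i => f i ^ 2) (hg : Summable fun i => g i ^ 2) :
    Summable (fun i => f i * g i) ∧
      ∑' i, f i * g i ≤ √(∑' i, f i ^ 2) * √(∑' i, g i ^ 2) := by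
  have := Real.summable_and_inner_le_Lp_mul_Lq_tsum_of_nonneg Real.HolderConjugate.two_two
    hf0 hg0 (by simpa using hf) (by simpa using hg)
  simpa [Real.sqrt_eq_rpow] using this

theorem summable_int_one_add_sq_rpow_neg {p : ℝ} (hp : 1 / 2 < p) :
    Summable fun n : ℤ => (1 + (n : ℝ) ^ 2) ^ (-p) := by
  refine (Real.summable_abs_int_rpow (b := 2 * p) (by linarith)).of_norm_bounded_eventually ?_
  filter_upwards [eventually_cofinite_ne 0] with n hn
  have hn' : (0 : ℝ) < |(n : ℝ)| := by positivity
  rw [Real.norm_of_nonneg (by positivity), neg_mul_eq_mul_neg, Real.rpow_mul hn'.le,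
    Real.rpow_two, sq_abs]
  exact Real.rpow_le_rpow_of_nonpos (by positivity) (by linarith) (by linarith)

theorem summable_pi_prod {ι κ : Type*} [Fintype ι] {f : κ → ℝ} (hf0 : ∀ x, 0 ≤ f x)
    (hf : Summable f) : Summable fun x : ι → κ => ∏ i, f (x i) := by
  classical
  refine summable_of_sum_le (c := ∏ _i : ι, ∑' x, f x)
    (fun x => Finset.prod_nonneg fun i _ => hf0 _) fun S => ?_
  calc ∑ x ∈ S, ∏ i, f (x i)
      ≤ ∑ x ∈ Fintype.piFinset fun i => S.image (· i), ∏ i, f (x i) :=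
        Finset.sum_le_sum_of_subset_of_nonneg
          (fun x hx => Fintype.mem_piFinset.mpr fun i => Finset.mem_image_of_mem _ hx)
          fun x _ _ => Finset.prod_nonneg fun i _ => hf0 _
    _ = ∏ i, ∑ y ∈ S.image (· i), f y := (Finset.prod_univ_sum _ _).symm
    _ ≤ ∏ _i : ι, ∑' x, f x :=
        Finset.prod_le_prod (fun i _ => Finset.sum_nonneg fun y _ => hf0 y)
          fun i _ => hf.sum_le_tsum _ fun y _ => hf0 y

theorem abs_le_one_add_sq_rpow_mul {x y : ℝ} (h : |x| ≤ |y|) :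
    |x| ≤ (1 + x ^ 2) ^ (1 / 4 : ℝ) * (1 + y ^ 2) ^ (1 / 4 : ℝ) := by
  have hxy : x ^ 2 ≤ y ^ 2 := sq_le_sq.mpr h
  rw [← Real.mul_rpow (by positivity) (by positivity)]
  calc |x| = (|x| ^ 4) ^ (1 / 4 : ℝ) := by
        rw [one_div]
        exact_mod_cast (Real.pow_rpow_inv_natCast (abs_nonneg x) (n := 4) (by norm_num)).symm
    _ ≤ ((1 + x ^ 2) * (1 + y ^ 2)) ^ (1 / 4 : ℝ) := by
        gcongr
        nlinarith [sq_abs x, sq_nonneg x, mul_le_mul_of_nonneg_left hxy (sq_nonneg x)]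

section Convolution

variable {G : Type*} [AddCommGroup G]

def seqConv (φ ψ : G → ℝ) (j : G) : ℝ := ∑' m, φ m * ψ (j - m)

theorem summable_and_hasSum_seqConv_of_nonneg {F H : G → ℝ} (hF0 : ∀ m, 0 ≤ F m)
    (hH0 : ∀ m, 0 ≤ H m) (hF : Summable F) (hH : Summable H) :
    (∀ j, Summable fun m => F m * H (j - m)) ∧
      HasSum (seqConv F H) ((∑' m, F m) * ∑' m, H m) := by
  let e := (Equiv.prodComm G G).trans (Equiv.prodShear (Equiv.refl G) Equiv.subRight)
  have hshear : (fun p : G × G => F p.1 * H p.2) ∘ e = fun p => F p.2 * H (p.1 - p.2) := by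
    ext p
    simp [e]
  have hprod : Summable fun p : G × G => F p.1 * H p.2 := hF.mul_of_nonneg hH hF0 hH0
  have hsheared : Summable fun p : G × G => F p.2 * H (p.1 - p.2) := by
    rw [← hshear]
    exact e.summable_iff.mpr hprod
  have hfib : ∀ j, Summable fun m => F m * H (j - m) :=
    ((summable_prod_of_nonneg fun p => mul_nonneg (hF0 _) (hH0 _)).mp hsheared).1
  refine ⟨hfib, ?_⟩
  have htotal : ∑' p : G × G, F p.2 * H (p.1 - p.2) = (∑' m, F m) * ∑' m, H m := by
    rw [← hshear, hF.tsum_mul_tsum hH hprod]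
    exact e.tsum_eq fun p => F p.1 * H p.2
  rw [← htotal]
  exact hsheared.hasSum.prod_fiberwise fun j => (hfib j).hasSum

theorem summable_comp_sub_left_iff {f : G → ℝ} (j : G) :
    (Summable fun m => f (j - m)) ↔ Summable f :=
  (Equiv.subLeft j).summable_iff

theorem tsum_comp_sub_left (f : G → ℝ) (j : G) : ∑' m, f (j - m) = ∑' m, f m :=
  (Equiv.subLeft j).tsum_eq f

theorem seqConv_comm (φ ψ : G → ℝ) (j : G) : seqConv ψ φ j = seqConv φ ψ j := by
  rw [seqConv, ← tsum_comp_sub_left _ j]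
  simp [seqConv, mul_comm]

theorem summable_shift_comm {φ ψ : G → ℝ} {j : G} (h : Summable fun m => φ m * ψ (j - m)) :
    Summable fun m => ψ m * φ (j - m) := by
  rw [← summable_comp_sub_left_iff j]
  simpa [mul_comm] using h

theorem seqConv_nonneg {φ ψ : G → ℝ} (hφ : ∀ m, 0 ≤ φ m) (hψ : ∀ m, 0 ≤ ψ m) (j : G) :
    0 ≤ seqConv φ ψ j :=
  tsum_nonneg fun m => mul_nonneg (hφ m) (hψ _)

variable {w φ ψ : G → ℝ} {c : ℝ}

theorem summable_and_seqConv_weight_le (hw0 : ∀ m, 0 < w m) (hK : Summable fun m => (w m)⁻¹ ^ 2)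
    (hφ0 : ∀ m, 0 ≤ φ m) (hψ0 : ∀ m, 0 ≤ ψ m)
    (hφ : Summable fun m => (w m * φ m) ^ 2) (hψ : Summable fun m => (w m * ψ m) ^ 2) (j : G) :
    Summable (fun m => w m * φ m * ψ (j - m)) ∧
      seqConv (fun m => w m * φ m) ψ j ≤ √(∑' m, (w m)⁻¹ ^ 2) *
        √(seqConv (fun m => (w m * φ m) ^ 2) (fun m => (w m * ψ m) ^ 2) j) := by
  have hfib := (summable_and_hasSum_seqConv_of_nonneg (fun m => sq_nonneg _)
    (fun m => sq_nonneg _) hφ hψ).1 j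
  have hKshift : Summable fun m => (w (j - m))⁻¹ ^ 2 :=
    (summable_comp_sub_left_iff (f := fun m => (w m)⁻¹ ^ 2) j).mpr hK
  obtain ⟨hsum, hle⟩ := summable_mul_and_tsum_mul_le_sqrt
    (f := fun m => w m * φ m * (w (j - m) * ψ (j - m))) (g := fun m => (w (j - m))⁻¹)
    (fun m => mul_nonneg (mul_nonneg (hw0 m).le (hφ0 m)) (mul_nonneg (hw0 _).le (hψ0 _)))
    (fun m => (inv_pos.2 (hw0 (j - m))).le) (by simpa only [mul_pow] using hfib) hKshift
  have hcancel : ∀ m, w m * φ m * (w (j - m) * ψ (j - m)) * (w (j - m))⁻¹ =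
      w m * φ m * ψ (j - m) := fun m => by
    have := (hw0 (j - m)).ne'
    field_simp
  simp only [hcancel, tsum_comp_sub_left (fun m => (w m)⁻¹ ^ 2) j] at hsum hle
  refine ⟨hsum, hle.trans_eq ?_⟩
  simp only [seqConv, mul_pow, mul_comm]

theorem summable_and_mul_seqConv_le (hw0 : ∀ m, 0 < w m)
    (hw : ∀ m n, w (m + n) ≤ c * (w m + w n)) (hφ0 : ∀ m, 0 ≤ φ m) (hψ0 : ∀ m, 0 ≤ ψ m) {j : G}
    (hA : Summable fun m => w m * φ m * ψ (j - m))
    (hB : Summable fun m => φ m * (w (j - m) * ψ (j - m))) :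
    Summable (fun m => φ m * ψ (j - m)) ∧
      w j * seqConv φ ψ j ≤
        c * (seqConv (fun m => w m * φ m) ψ j + seqConv φ (fun m => w m * ψ m) j) := by
  have hsplit : ∀ m, w j * (φ m * ψ (j - m)) ≤
      c * (w m * φ m * ψ (j - m) + φ m * (w (j - m) * ψ (j - m))) := fun m => by
    have h := hw m (j - m)
    rw [add_sub_cancel] at h
    calc w j * (φ m * ψ (j - m)) ≤ c * (w m + w (j - m)) * (φ m * ψ (j - m)) :=
          mul_le_mul_of_nonneg_right h (mul_nonneg (hφ0 m) (hψ0 _))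
      _ = _ := by ring
  have hmaj := (hA.add hB).mul_left c
  have hconv : Summable fun m => φ m * ψ (j - m) :=
    (hmaj.mul_left (w j)⁻¹).of_nonneg_of_le (fun m => mul_nonneg (hφ0 m) (hψ0 _)) fun m => by
      rw [le_inv_mul_iff₀ (hw0 j)]
      exact hsplit m
  refine ⟨hconv, ?_⟩
  calc w j * seqConv φ ψ j = ∑' m, w j * (φ m * ψ (j - m)) := tsum_mul_left.symm
    _ ≤ ∑' m, c * (w m * φ m * ψ (j - m) + φ m * (w (j - m) * ψ (j - m))) :=
        (hconv.mul_left _).tsum_le_tsum hsplit hmaj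
    _ = _ := by rw [tsum_mul_left, hA.tsum_add hB, seqConv, seqConv]

theorem summable_and_sq_mul_seqConv_le (hw0 : ∀ m, 0 < w m)
    (hw : ∀ m n, w (m + n) ≤ c * (w m + w n)) (hK : Summable fun m => (w m)⁻¹ ^ 2)
    (hφ0 : ∀ m, 0 ≤ φ m) (hψ0 : ∀ m, 0 ≤ ψ m)
    (hφ : Summable fun m => (w m * φ m) ^ 2) (hψ : Summable fun m => (w m * ψ m) ^ 2) (j : G) :
    Summable (fun m => φ m * ψ (j - m)) ∧
      (w j * seqConv φ ψ j) ^ 2 ≤ 4 * c ^ 2 * (∑' m, (w m)⁻¹ ^ 2) *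
        seqConv (fun m => (w m * φ m) ^ 2) (fun m => (w m * ψ m) ^ 2) j := by
  set K := ∑' m, (w m)⁻¹ ^ 2
  set S := seqConv (fun m => (w m * φ m) ^ 2) (fun m => (w m * ψ m) ^ 2) j
  have hc : 0 ≤ c := by
    have := hw 0 0
    rw [add_zero] at this
    nlinarith [hw0 0]
  obtain ⟨hA, hAle⟩ := summable_and_seqConv_weight_le hw0 hK hφ0 hψ0 hφ hψ j
  obtain ⟨hB, hBle⟩ := summable_and_seqConv_weight_le hw0 hK hψ0 hφ0 hψ hφ j
  rw [seqConv_comm, seqConv_comm (fun m => (w m * φ m) ^ 2)] at hBle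
  obtain ⟨hconv, hle⟩ :=
    summable_and_mul_seqConv_le hw0 hw hφ0 hψ0 hA (summable_shift_comm (φ := fun m => w m * ψ m) hB)
  refine ⟨hconv, ?_⟩
  have hlin : w j * seqConv φ ψ j ≤ 2 * c * √K * √S :=
    calc w j * seqConv φ ψ j ≤ c * (√K * √S + √K * √S) := hle.trans (by gcongr)
      _ = 2 * c * √K * √S := by ring
  have h0 : 0 ≤ w j * seqConv φ ψ j := mul_nonneg (hw0 j).le (seqConv_nonneg hφ0 hψ0 j)
  have hK0 : 0 ≤ K := tsum_nonneg fun m => sq_nonneg _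
  have hS0 : 0 ≤ S := seqConv_nonneg (fun m => sq_nonneg _) (fun m => sq_nonneg _) j
  calc (w j * seqConv φ ψ j) ^ 2 ≤ (2 * c * √K * √S) ^ 2 := pow_le_pow_left₀ h0 hlin 2
    _ = 4 * c ^ 2 * K * S := by
      rw [mul_pow, mul_pow, mul_pow, Real.sq_sqrt hK0, Real.sq_sqrt hS0]
      ring

theorem summable_and_tsum_sq_mul_seqConv_le (hw0 : ∀ m, 0 < w m)
    (hw : ∀ m n, w (m + n) ≤ c * (w m + w n)) (hK : Summable fun m => (w m)⁻¹ ^ 2)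
    (hφ0 : ∀ m, 0 ≤ φ m) (hψ0 : ∀ m, 0 ≤ ψ m)
    (hφ : Summable fun m => (w m * φ m) ^ 2) (hψ : Summable fun m => (w m * ψ m) ^ 2) :
    (∀ j, Summable fun m => φ m * ψ (j - m)) ∧ Summable (fun j => (w j * seqConv φ ψ j) ^ 2) ∧
      ∑' j, (w j * seqConv φ ψ j) ^ 2 ≤ 4 * c ^ 2 * (∑' m, (w m)⁻¹ ^ 2) *
        ((∑' m, (w m * φ m) ^ 2) * ∑' m, (w m * ψ m) ^ 2) := by
  have hmaj := ((summable_and_hasSum_seqConv_of_nonneg (fun m => sq_nonneg _) (fun m => sq_nonneg _)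
    hφ hψ).2).mul_left (4 * c ^ 2 * ∑' m, (w m)⁻¹ ^ 2)
  have hpt := fun j => summable_and_sq_mul_seqConv_le hw0 hw hK hφ0 hψ0 hφ hψ j
  have hsum := hmaj.summable.of_nonneg_of_le (fun j => sq_nonneg _) fun j => (hpt j).2
  exact ⟨fun j => (hpt j).1, hsum, hasSum_le (fun j => (hpt j).2) hsum.hasSum hmaj⟩

end Convolution

theorem jb_sq (j : Freq d) : jb j ^ 2 = 1 + ∑ i, (j i : ℝ) ^ 2 :=
  Real.sq_sqrt (by positivity)

theorem one_le_jb (j : Freq d) : 1 ≤ jb j :=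
  Real.one_le_sqrt.mpr (le_add_of_nonneg_right (by positivity))

theorem jb_pos (j : Freq d) : 0 < jb j := zero_lt_one.trans_le (one_le_jb j)

theorem jb_neg (j : Freq d) : jb (-j) = jb j := by
  simp [jb]

theorem sq_jb_rpow (σ : ℝ) (j : Freq d) : (jb j ^ σ) ^ 2 = jb j ^ (2 * σ) := by
  rw [← Real.rpow_mul_natCast (jb_pos j).le, mul_comm]
  norm_num

theorem jb_add_le_two_mul_max (m n : Freq d) : jb (m + n) ≤ 2 * max (jb m) (jb n) := by
  have hsq : jb (m + n) ^ 2 ≤ 2 * (jb m ^ 2 + jb n ^ 2) := by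
    have hcoord : ∀ i, ((m + n) i : ℝ) ^ 2 ≤ 2 * (m i : ℝ) ^ 2 + 2 * (n i : ℝ) ^ 2 := fun i => by
      rw [Pi.add_apply]
      push_cast
      nlinarith [sq_nonneg ((m i : ℝ) - n i)]
    have := Finset.sum_le_sum fun i (_ : i ∈ Finset.univ) => hcoord i
    rw [Finset.sum_add_distrib, ← Finset.mul_sum, ← Finset.mul_sum] at this
    rw [jb_sq, jb_sq, jb_sq]
    linarith
  have hm := le_max_left (jb m) (jb n)
  have hn := le_max_right (jb m) (jb n)
  nlinarith [jb_pos m, jb_pos n, jb_pos (m + n)]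

theorem jb_rpow_add_le {σ : ℝ} (hσ : 0 ≤ σ) (m n : Freq d) :
    jb (m + n) ^ σ ≤ 2 ^ σ * (jb m ^ σ + jb n ^ σ) := by
  have hmax : max (jb m) (jb n) ^ σ ≤ jb m ^ σ + jb n ^ σ := by
    rcases max_choice (jb m) (jb n) with h | h <;> rw [h] <;>
      linarith [Real.rpow_nonneg (jb_pos m).le σ, Real.rpow_nonneg (jb_pos n).le σ]
  calc jb (m + n) ^ σ ≤ (2 * max (jb m) (jb n)) ^ σ :=
        Real.rpow_le_rpow (jb_pos _).le (jb_add_le_two_mul_max m n) hσ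
    _ = 2 ^ σ * max (jb m) (jb n) ^ σ :=
        Real.mul_rpow zero_le_two ((jb_pos m).le.trans (le_max_left _ _))
    _ ≤ 2 ^ σ * (jb m ^ σ + jb n ^ σ) := by gcongr

theorem summable_jb_rpow_neg {q : ℝ} (hq : (d : ℝ) < q) :
    Summable fun j : Freq d => jb j ^ (-q) := by
  rcases Nat.eq_zero_or_pos d with rfl | hd
  · exact .of_finite
  set p := q / (2 * d)
  have hp : 1 / 2 < p := by
    rw [lt_div_iff₀ (by positivity)]
    linarith
  -- `⟨j⟩^{-q} ≤ ∏ᵢ (1 + jᵢ²)^{-q/(2d)}`, since `∏ᵢ (1 + jᵢ²) ≤ ⟨j⟩^{2d}`.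
  refine (summable_pi_prod (fun n => by positivity)
    (summable_int_one_add_sq_rpow_neg hp)).of_nonneg_of_le
    (fun j => Real.rpow_nonneg (jb_pos j).le _) fun j => ?_
  have hprod : ∏ i, (1 + (j i : ℝ) ^ 2) ≤ (jb j ^ 2) ^ d := by
    calc ∏ i, (1 + (j i : ℝ) ^ 2) ≤ ∏ _i : Fin d, jb j ^ 2 :=
          Finset.prod_le_prod (fun i _ => by positivity) fun i _ => by
            rw [jb_sq]
            linarith [Finset.single_le_sum (fun i' _ => sq_nonneg (j i' : ℝ)) (Finset.mem_univ i)]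
      _ = (jb j ^ 2) ^ d := by simp
  calc jb j ^ (-q) = ((jb j ^ 2) ^ d) ^ (-p) := by
        rw [← pow_mul, ← Real.rpow_natCast, ← Real.rpow_mul (jb_pos j).le]
        have hd' : (d : ℝ) ≠ 0 := by positivity
        simp only [p]
        push_cast
        field_simp
    _ ≤ (∏ i, (1 + (j i : ℝ) ^ 2)) ^ (-p) :=
        Real.rpow_le_rpow_of_nonpos (by positivity) hprod (by linarith)
    _ = ∏ i, (1 + (j i : ℝ) ^ 2) ^ (-p) :=
        (Real.finsetProd_rpow _ _ (fun i _ => by positivity) _).symm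

theorem summable_inv_jb_rpow_sq {σ : ℝ} (hσ : (d : ℝ) < 2 * σ) :
    Summable fun j : Freq d => (jb j ^ σ)⁻¹ ^ 2 :=
  (summable_jb_rpow_neg hσ).congr fun j => by
    rw [inv_pow, sq_jb_rpow, Real.rpow_neg (jb_pos j).le]

theorem dotk_neg (k : Fin d → ℝ) (j : Freq d) : dotk k (-j) = -dotk k j := by
  simp [dotk]

theorem dotk_sub (k : Fin d → ℝ) (a b : Freq d) : dotk k (a - b) = dotk k a - dotk k b := by
  simp [dotk, sub_mul]

theorem wt_neg (k : Fin d → ℝ) (s θ : ℝ) (j : Freq d) : wt k s θ (-j) = wt k s θ j := by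
  rw [wt, wt, jb_neg, dotk_neg, neg_sq]

theorem memSob_conjC_iff {k : Fin d → ℝ} {s θ : ℝ} {u : Coeffs d} :
    MemSob k s θ (conjC u) ↔ MemSob k s θ u := by
  rw [MemSob, MemSob, ← (Equiv.neg (Freq d)).summable_iff]
  simp [Function.comp_def, conjC, wt_neg]

theorem sobNorm_conjC (k : Fin d → ℝ) (s θ : ℝ) (u : Coeffs d) :
    sobNorm k s θ (conjC u) = sobNorm k s θ u := by
  rw [sobNorm, sobNorm, ← (Equiv.neg (Freq d)).tsum_eq]
  simp [conjC, wt_neg]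

theorem Holo.dotk_nonpos {k : Fin d → ℝ} {R : Coeffs d} (hR : Holo k R) {j : Freq d}
    (h : R j ≠ 0) : dotk k j ≤ 0 :=
  not_lt.mp fun hj => h (hR j hj)

theorem Holo.dotk_nonneg_of_conjC {k : Fin d → ℝ} {R : Coeffs d} (hR : Holo k R) {j : Freq d}
    (h : conjC R j ≠ 0) : 0 ≤ dotk k j := by
  have := hR.dotk_nonpos ((map_ne_zero _).mp h)
  rw [dotk_neg] at this
  linarith

/-- `|(⟨∂_α⟩^{1/2} u)^_m|`, where `⟨x⟩ = (1 + x²)^{1/2}`. -/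
def halfDerivAbs (k : Fin d → ℝ) (u : Coeffs d) (m : Freq d) : ℝ :=
  (1 + dotk k m ^ 2) ^ (1 / 4 : ℝ) * ‖u m‖

theorem halfDerivAbs_nonneg (k : Fin d → ℝ) (u : Coeffs d) (m : Freq d) :
    0 ≤ halfDerivAbs k u m := by
  unfold halfDerivAbs
  positivity

theorem sq_jb_rpow_mul_halfDerivAbs (k : Fin d → ℝ) (σ : ℝ) (u : Coeffs d) (m : Freq d) :
    (jb m ^ σ * halfDerivAbs k u m) ^ 2 = wt k σ (1 / 2) m * ‖u m‖ ^ 2 := by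
  have hquarter : ((1 + dotk k m ^ 2) ^ (1 / 4 : ℝ)) ^ 2 = (1 + dotk k m ^ 2) ^ (1 / 2 : ℝ) := by
    rw [← Real.rpow_mul_natCast (by positivity)]
    norm_num
  rw [halfDerivAbs, wt, mul_pow, mul_pow, sq_jb_rpow, hquarter]
  ring

theorem memSob_half_iff_summable_halfDerivAbs {k : Fin d → ℝ} {σ : ℝ} {u : Coeffs d} :
    MemSob k σ (1 / 2) u ↔ Summable fun m => (jb m ^ σ * halfDerivAbs k u m) ^ 2 := by
  simp only [MemSob, sq_jb_rpow_mul_halfDerivAbs]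

theorem sobNorm_half_sq (k : Fin d → ℝ) (σ : ℝ) (u : Coeffs d) :
    sobNorm k σ (1 / 2) u ^ 2 = ∑' m, (jb m ^ σ * halfDerivAbs k u m) ^ 2 := by
  simp only [sobNorm, ← sq_jb_rpow_mul_halfDerivAbs]
  exact Real.sq_sqrt (tsum_nonneg fun m => sq_nonneg _)

theorem norm_mul_dAl_le {k : Fin d → ℝ} {u v : Coeffs d} {m n : Freq d}
    (h : u m ≠ 0 → v n ≠ 0 → |dotk k n| ≤ |dotk k m|) :
    ‖u m * dAl k v n‖ ≤ halfDerivAbs k u m * halfDerivAbs k v n := by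
  by_cases hu : u m = 0
  · simpa [hu] using mul_nonneg (halfDerivAbs_nonneg k u m) (halfDerivAbs_nonneg k v n)
  by_cases hv : v n = 0
  · simpa [hv, dAl] using mul_nonneg (halfDerivAbs_nonneg k u m) (halfDerivAbs_nonneg k v n)
  have hq := abs_le_one_add_sq_rpow_mul (h hu hv)
  rw [norm_mul, dAl, norm_mul, norm_mul, Complex.norm_I, one_mul, Complex.norm_real,
    Real.norm_eq_abs, halfDerivAbs, halfDerivAbs]
  calc ‖u m‖ * (|dotk k n| * ‖v n‖)
      ≤ ‖u m‖ * ((1 + dotk k n ^ 2) ^ (1 / 4 : ℝ) * (1 + dotk k m ^ 2) ^ (1 / 4 : ℝ) * ‖v n‖) := by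
        gcongr
    _ = _ := by ring

theorem norm_cmul_le_seqConv {u v : Coeffs d} {f g : Freq d → ℝ} {j : Freq d}
    (h : ∀ m, ‖u m * v (j - m)‖ ≤ f m * g (j - m)) (hfg : Summable fun m => f m * g (j - m)) :
    ‖cmul u v j‖ ≤ seqConv f g j :=
  tsum_of_norm_bounded hfg.hasSum h

theorem norm_Pb_sub_Pp_le {k : Fin d → ℝ} {u v : Coeffs d} {j : Freq d} {B : ℝ}
    (hu : 0 ≤ dotk k j → ‖u j‖ ≤ B) (hv : dotk k j ≤ 0 → ‖v j‖ ≤ B) :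
    ‖(Pb k u - Pp k v) j‖ ≤ B := by
  simp only [Pi.sub_apply, Pb, Pp]
  rcases lt_trichotomy (dotk k j) 0 with h | h | h
  · simpa [h] using hv h.le
  · have hsplit : u j - u j / 2 - v j / 2 = u j / 2 - v j / 2 := by ring
    simp only [h, lt_irrefl, if_false, if_true, hsplit]
    calc ‖u j / 2 - v j / 2‖ ≤ ‖u j‖ / 2 + ‖v j‖ / 2 := by
          simpa using norm_sub_le (u j / 2) (v j / 2)
      _ ≤ B := by linarith [hu h.ge, hv h.le]
  · simpa [h.not_gt, h.ne'] using hu h.le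

theorem norm_aCf_le {k : Fin d → ℝ} {R : Coeffs d} (hR : Holo k R) {j : Freq d}
    (hfib : Summable fun m => halfDerivAbs k (conjC R) m * halfDerivAbs k R (j - m)) :
    ‖aCf k R j‖ ≤ seqConv (halfDerivAbs k (conjC R)) (halfDerivAbs k R) j := by
  rw [aCf, norm_mul, Complex.norm_I, one_mul]
  refine norm_Pb_sub_Pp_le (fun hj => ?_) fun hj => ?_
  · refine norm_cmul_le_seqConv (fun m => norm_mul_dAl_le fun hm hjm => ?_) hfib
    have h1 := hR.dotk_nonneg_of_conjC hm
    have h2 := hR.dotk_nonpos hjm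
    rw [dotk_sub] at h2 ⊢
    rw [abs_of_nonpos h2, abs_of_nonneg h1]
    linarith
  · rw [← seqConv_comm]
    refine norm_cmul_le_seqConv (fun m => norm_mul_dAl_le fun hm hjm => ?_)
      (summable_shift_comm hfib)
    have h1 := hR.dotk_nonpos hm
    have h2 := hR.dotk_nonneg_of_conjC hjm
    rw [dotk_sub] at h2 ⊢
    rw [abs_of_nonneg h2, abs_of_nonpos h1]
    linarith

theorem memHs_and_hsNorm_le {s B : ℝ} {u : Coeffs d} {g : Freq d → ℝ} (hg : Summable g)
    (hu : ∀ j, jb j ^ (2 * s) * ‖u j‖ ^ 2 ≤ g j) (hB : 0 ≤ B) (hgB : ∑' j, g j ≤ B ^ 2) :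
    MemHs s u ∧ HsNorm s u ≤ B := by
  have hmem : MemHs s u :=
    hg.of_nonneg_of_le (fun j => mul_nonneg (Real.rpow_nonneg (jb_pos j).le _) (sq_nonneg _)) hu
  exact ⟨hmem, (Real.sqrt_le_sqrt ((hmem.tsum_le_tsum hu hg).trans hgB)).trans_eq (Real.sqrt_sq hB)⟩

theorem frequency_shift_A_bound_general
    (d : ℕ) (k : Fin d → ℝ)
    (s : ℝ) (hs : ((d : ℝ) + 1) / 2 < s) :
    ∃ C : ℝ, 0 < C ∧
      ∀ R : Coeffs d, Holo k R → MemSob k (s - 1/2) (1/2) R →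
        MemHs (s - 1/2) (aCf k R) ∧
        HsNorm (s - 1/2) (aCf k R) ≤ C * sobNorm k (s - 1/2) (1/2) R ^ 2 := by
  set σ := s - 1 / 2 with hσ_def
  have hσ : 0 ≤ σ := by linarith [(d.cast_nonneg : (0 : ℝ) ≤ d)]
  have hK := summable_inv_jb_rpow_sq (d := d) (σ := σ) (by linarith)
  set K := ∑' m : Freq d, (jb m ^ σ)⁻¹ ^ 2
  have hKpos : 0 < K := hK.tsum_pos (fun m => by positivity) 0 (by simp [jb])
  refine ⟨2 * 2 ^ σ * √K, by positivity, fun R hR hRσ => ?_⟩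
  obtain ⟨hfib, hsum, hle⟩ := summable_and_tsum_sq_mul_seqConv_le
    (fun m => Real.rpow_pos_of_pos (jb_pos m) σ) (jb_rpow_add_le hσ) hK
    (halfDerivAbs_nonneg k _) (halfDerivAbs_nonneg k _)
    (memSob_half_iff_summable_halfDerivAbs.mp (memSob_conjC_iff.mpr hRσ))
    (memSob_half_iff_summable_halfDerivAbs.mp hRσ)
  rw [← sobNorm_half_sq, ← sobNorm_half_sq, sobNorm_conjC] at hle
  refine memHs_and_hsNorm_le hsum (fun j => ?_) (by positivity) (hle.trans_eq ?_)
  · rw [mul_pow, sq_jb_rpow]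
    exact mul_le_mul_of_nonneg_left (pow_le_pow_left₀ (norm_nonneg _) (norm_aCf_le hR (hfib j)) 2)
      (Real.rpow_nonneg (jb_pos j).le _)
  · rw [mul_pow, mul_pow, mul_pow, Real.sq_sqrt hKpos.le]
    ring

/-- **Lemma 6.3(ii) (Bound for `a` in terms of `A`).** Let `s > (d+1)/2`. There is a
constant `C = C(d,s,k)` such that for every holomorphic `R ∈ H^{s-1/2,1/2}(𝕋^d)`,
the function `a := i(P̄[conj(R)·∂_α R] − P[R·∂_α conj(R)])` satisfies
`‖a‖_{H^{s-1/2}} ≤ C ‖R‖²_{H^{s-1/2,1/2}}`. -/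
theorem frequency_shift_A_bound
    (d : ℕ) (hd : 1 ≤ d) (k : Fin d → ℝ) (hk : Indep k)
    (s : ℝ) (hs : ((d : ℝ) + 1) / 2 < s) :
    ∃ C : ℝ, 0 < C ∧
      ∀ R : Coeffs d, Holo k R → MemSob k (s - 1/2) (1/2) R →
        MemHs (s - 1/2) (aCf k R) ∧
        HsNorm (s - 1/2) (aCf k R) ≤ C * sobNorm k (s - 1/2) (1/2) R ^ 2 :=
  frequency_shift_A_bound_general d k s hs

end
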